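/- Let A be a semicombinatory algebra, Y a set of variables, x ∈ Y, and p a formal polynomial of A in variables from Y. For every assignment c : Y∖{x} → A: if there exists b ∈ A such that eval(p)(c ∪ {x ↦ b}) is defined, then eval(λ*x.p)(c) is defined. -/
import Mathlib


/-- Formal polynomials of a semicombinatory algebra with carrier `A` in
variables from `Y`: terms built from variables, constants for elements of `A`,
the constant symbols `S`, `K`, and the binary application symbol. -/
inductive PolyTerm (A : Type) (Y : Type) : Type where
  | var : Y → PolyTerm A Y
  | const : A → PolyTerm A Y
  | S : PolyTerm A Y
  | K : PolyTerm A Y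
  | app : PolyTerm A Y → PolyTerm A Y → PolyTerm A Y

/-- Whether the variable `x` occurs in a formal polynomial. -/
def occursIn {A Y : Type} [DecidableEq Y] (x : Y) : PolyTerm A Y → Bool
  | .var y => decide (y = x)
  | .const _ => false
  | .S => false
  | .K => false
  | .app r q => occursIn x r || occursIn x q

/-- The abstraction operator `λ*x`:
`λ*x.x := s·k·k`; `λ*x.p := k·p` if `x` does not occur in `p`;
`λ*x.(r·q) := s·(λ*x.r)·(λ*x.q)` otherwise. -/
def lamStar {A Y : Type} [DecidableEq Y] (x : Y) : PolyTerm A Y → PolyTerm A Y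
  | .var y =>
      if y = x then .app (.app .S .K) .K else .app .K (.var y)
  | .app r q =>
      if occursIn x (.app r q) then .app (.app .S (lamStar x r)) (lamStar x q)
      else .app .K (.app r q)
  | .const a => .app .K (.const a)
  | .S => .app .K .S
  | .K => .app .K .K

/-- Partial evaluation of a formal polynomial in a semicombinatory algebra
(with interpretations `s`, `k` of the constants `S`, `K`) under an assignment
`c : Y → A`; a product is defined only when both factors are defined and their
product in `A` is defined. -/
def evalT {A Y : Type} (app : A → A → Part A) (s k : A) (c : Y → A) :
    PolyTerm A Y → Part A
  | .var y => Part.some (c y)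
  | .const a => Part.some a
  | .S => Part.some s
  | .K => Part.some k
  | .app r q => (evalT app s k c r).bind fun u => (evalT app s k c q).bind fun v => app u v

/-- Strict extension of the application to partial arguments. -/
def pApp {A : Type} (app : A → A → Part A) (x y : Part A) : Part A :=
  x.bind fun a => y.bind fun b => app a b

section Aux
variable {A : Type} (app : A → A → Part A)

lemma dom_left {t u : Part A} (h : (pApp app t u).Dom) : t.Dom := by
  rw [Part.dom_iff_mem] at h ⊢
  obtain ⟨a, ha⟩ := h
  rw [pApp, Part.mem_bind_iff] at ha
  obtain ⟨b, hb, _⟩ := ha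
  exact ⟨b, hb⟩

variable (s k : A)

lemma kBeta (h2 : ∀ x y : A,
      pApp app (pApp app (Part.some k) (Part.some x)) (Part.some y) = Part.some x) :
    ∀ (t : Part A) (b : A),
    pApp app (pApp app (Part.some k) t) (Part.some b) = t := by
  intro t b
  rcases Part.eq_none_or_eq_some t with h | ⟨a, h⟩ <;> subst h
  · ext a; simp [pApp, Part.mem_bind_iff]
  · exact h2 a b

lemma sLift (h1 : ∀ x y z : A,
      pApp app (pApp app (pApp app (Part.some s) (Part.some x)) (Part.some y)) (Part.some z)
        = pApp app (pApp app (Part.some x) (Part.some z)) (pApp app (Part.some y) (Part.some z))) :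
    ∀ (u v : Part A) (z : A),
    pApp app (pApp app (pApp app (Part.some s) u) v) (Part.some z)
      = pApp app (pApp app u (Part.some z)) (pApp app v (Part.some z)) := by
  intro u v z
  rcases Part.eq_none_or_eq_some u with h | ⟨a, h⟩ <;> subst h
  · ext w; simp [pApp, Part.mem_bind_iff]
  rcases Part.eq_none_or_eq_some v with h | ⟨b, h⟩ <;> subst h
  · ext w; simp [pApp, Part.mem_bind_iff]
  · exact h1 a b z

end Aux

section Aux2
set_option linter.unusedSectionVars false
variable {A Y : Type} [DecidableEq Y] (app : A → A → Part A) (s k : A)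

lemma evalT_app' (c : Y → A) (r q : PolyTerm A Y) :
    evalT app s k c (.app r q) = pApp app (evalT app s k c r) (evalT app s k c q) := rfl

lemma evalT_var' (c : Y → A) (y : Y) : evalT app s k c (.var y) = Part.some (c y) := rfl
lemma evalT_const' (c : Y → A) (a : A) : evalT app s k c (.const a) = Part.some a := rfl
lemma evalT_S' (c : Y → A) : evalT app s k c .S = Part.some s := rfl
lemma evalT_K' (c : Y → A) : evalT app s k c .K = Part.some k := rfl

lemma eval_update_of_not_occurs (x : Y) (p : PolyTerm A Y) (h : occursIn x p = false)
    (c : Y → A) (b : A) :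
    evalT app s k (Function.update c x b) p = evalT app s k c p := by
  induction p with
  | var y =>
    simp [occursIn] at h
    simp [evalT_var', Function.update, h]
  | const a => rfl
  | S => rfl
  | K => rfl
  | app r q ihr ihq =>
    simp [occursIn] at h
    rw [evalT_app', evalT_app', ihr h.1, ihq h.2]

lemma betaLemma
    (h1 : ∀ x y z : A,
      pApp app (pApp app (pApp app (Part.some s) (Part.some x)) (Part.some y)) (Part.some z)
        = pApp app (pApp app (Part.some x) (Part.some z)) (pApp app (Part.some y) (Part.some z)))
    (h2 : ∀ x y : A,
      pApp app (pApp app (Part.some k) (Part.some x)) (Part.some y) = Part.some x)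
    (x : Y) : ∀ (p : PolyTerm A Y) (c : Y → A) (b : A),
    pApp app (evalT app s k c (lamStar x p)) (Part.some b)
      = evalT app s k (Function.update c x b) p := by
  intro p
  induction p with
  | var y =>
    intro c b
    by_cases h : y = x
    · subst h
      have hl : lamStar y (.var y) = (.app (.app .S .K) .K : PolyTerm A Y) := by
        simp [lamStar]
      rw [hl, evalT_app', evalT_app']
      simp only [evalT_S', evalT_K', evalT_var', Function.update_self]
      rw [sLift app s h1]
      have hkd : (pApp app (Part.some k) (Part.some b)).Dom :=
        dom_left app (h := by rw [h2 b b]; trivial)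
      have he : pApp app (Part.some k) (Part.some b)
          = Part.some ((pApp app (Part.some k) (Part.some b)).get hkd) :=
        (Part.some_get hkd).symm
      nth_rewrite 2 [he]
      exact kBeta app k h2 (Part.some b) _
    · have hl : lamStar x (.var y) = (.app .K (.var y) : PolyTerm A Y) := by
        simp [lamStar, h]
      rw [hl, evalT_app']
      simp only [evalT_K', evalT_var', Function.update_of_ne h]
      exact kBeta app k h2 (Part.some (c y)) b
  | const a =>
    intro c b
    rw [show lamStar x (.const a) = (.app .K (.const a) : PolyTerm A Y) from rfl,
      evalT_app']
    simp only [evalT_K', evalT_const']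
    exact kBeta app k h2 (Part.some a) b
  | S =>
    intro c b
    rw [show lamStar x (.S) = (.app .K .S : PolyTerm A Y) from rfl,
      evalT_app']
    simp only [evalT_K', evalT_S']
    exact kBeta app k h2 (Part.some s) b
  | K =>
    intro c b
    rw [show lamStar x (.K) = (.app .K .K : PolyTerm A Y) from rfl,
      evalT_app']
    simp only [evalT_K']
    exact kBeta app k h2 (Part.some k) b
  | app r q ihr ihq =>
    intro c b
    by_cases h : occursIn x (PolyTerm.app r q)
    · have hl : lamStar x (.app r q)
          = (.app (.app .S (lamStar x r)) (lamStar x q) : PolyTerm A Y) := by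
        simp [lamStar, h]
      rw [hl, evalT_app', evalT_app', evalT_S', sLift app s h1, ihr, ihq, evalT_app']
    · have hl : lamStar x (.app r q) = (.app .K (.app r q) : PolyTerm A Y) := by
        simp [lamStar, h]
      rw [hl, evalT_app', evalT_K', kBeta app k h2]
      exact (eval_update_of_not_occurs app s k x _ (by simpa using h) c b).symm

end Aux2

/-- in a semicombinatory algebra `A`, for every variable `x`,
every formal polynomial `p` and every assignment `c`: if there exists `b ∈ A`
such that `eval(p)(c ∪ {x ↦ b})` is defined, then `eval(λ*x.p)(c)` is
defined. -/
theorem stmt7 (A : Type) [Nonempty A] (Y : Type) [DecidableEq Y]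
    (app : A → A → Part A) (s k : A)
    (h1 : ∀ x y z : A,
      pApp app (pApp app (pApp app (Part.some s) (Part.some x)) (Part.some y)) (Part.some z)
        = pApp app (pApp app (Part.some x) (Part.some z)) (pApp app (Part.some y) (Part.some z)))
    (h2 : ∀ x y : A,
      pApp app (pApp app (Part.some k) (Part.some x)) (Part.some y) = Part.some x) :
    ∀ (x : Y) (p : PolyTerm A Y) (c : Y → A),
      (∃ b : A, (evalT app s k (Function.update c x b) p).Dom) →
      (evalT app s k c (lamStar x p)).Dom := by
  rintro x p c ⟨b, hdom⟩
  have hb := betaLemma app s k h1 h2 x p c b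
  have hd : (pApp app (evalT app s k c (lamStar x p)) (Part.some b)).Dom := by
    rw [hb]; exact hdom
  exact dom_left app hd
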